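/- arXiv:1312.5152 — 2 statements merged into one kernel-verified Lean document; each statement's English description precedes it below -/
import Mathlib

section
/- Let n ≥ 3 and 1 ≤ l < k ≤ n−1 be integers, and let λ ∈ ℝ^{n−1} satisfy σ_m(λ) > 0 for all 1 ≤ m ≤ k. Then for every p ∈ {1, …, n−1}, (k−1)·H_{k−2}(Λ_p)·H_{l−1}(λ) − (l−1)·H_{k−1}(λ)·H_{l−2}(Λ_p) > 0. -/
/-- The `k`-th elementary symmetric polynomial of `x ∈ ℝ^m`
(`σ_0 = 1`, `σ_k = 0` for `k > m`). -/
noncomputable def esymmR (m : ℕ) (x : Fin m → ℝ) (k : ℕ) : ℝ :=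
  ∑ s ∈ Finset.powersetCard k (Finset.univ : Finset (Fin m)), ∏ i ∈ s, x i

/-- The normalized `k`-th elementary symmetric function `H_k = σ_k / C(m,k)`
(`H_0 = 1`, `H_k = 0` for `k > m`). -/
noncomputable def Hnorm (m : ℕ) (x : Fin m → ℝ) (k : ℕ) : ℝ :=
  esymmR m x k / (m.choose k : ℝ)

/-- The point of `ℝ^{m-1}` obtained from `x ∈ ℝ^m` by deleting the `p`-th coordinate. -/
def deleteCoord {m : ℕ} (x : Fin m → ℝ) (p : Fin m) : Fin (m - 1) → ℝ :=
  fun i => if (i : ℕ) < (p : ℕ) then x ⟨(i : ℕ), by have := i.isLt; omega⟩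
           else x ⟨(i : ℕ) + 1, by have := i.isLt; omega⟩


open Polynomial Finset

lemma Multiset.esymm_cons (a : ℝ) (s : Multiset ℝ) (j : ℕ) :
    (a ::ₘ s).esymm (j + 1) = s.esymm (j + 1) + a * s.esymm j := by
  simp only [Multiset.esymm, Multiset.powersetCard_cons, Multiset.map_add, Multiset.sum_add,
    Multiset.map_map]
  congr 1
  rw [Multiset.sum_map_mul_left.symm]
  congr 1
  ext t
  simp [Multiset.prod_cons]

lemma Multiset.esymm_eq_zero (s : Multiset ℝ) (j : ℕ) (h : Multiset.card s < j) :
    s.esymm j = 0 := by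
  simp [Multiset.esymm, Multiset.powersetCard_eq_empty _ h]

lemma newtonTop : ∀ (e : ℕ) (s : Multiset ℝ), Multiset.card s = e + 2 →
    2*((e:ℝ)+2) * s.esymm e * s.esymm (e+2) ≤ ((e:ℝ)+1) * s.esymm (e+1)^2 := by
  intro e
  induction e with
  | zero =>
    intro s hs
    obtain ⟨a, b, rfl⟩ := Multiset.card_eq_two.mp hs
    have h1 : ({a, b} : Multiset ℝ).esymm 0 = 1 := by simp [Multiset.esymm]
    have h2 : ({a, b} : Multiset ℝ).esymm 1 = a + b := by
      simp [Multiset.esymm, Multiset.powersetCard_one]; ring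
    have h3 : ({a, b} : Multiset ℝ).esymm 2 = a * b := by
      show (a ::ₘ {b}).esymm (1+1) = a*b
      rw [Multiset.esymm_cons]
      have : ({b} : Multiset ℝ).esymm 2 = 0 := Multiset.esymm_eq_zero _ _ (by simp)
      have h1' : ({b} : Multiset ℝ).esymm 1 = b := by simp [Multiset.esymm, Multiset.powersetCard_one]
      rw [this, h1']; ring
    rw [h1, h2, h3]
    nlinarith [sq_nonneg (a - b)]
  | succ e ih =>
    intro s hs
    have hne : s ≠ 0 := by
      intro h; rw [h] at hs; simp at hs
    obtain ⟨t, ht⟩ := Multiset.exists_mem_of_ne_zero hne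
    obtain ⟨s', rfl⟩ := Multiset.exists_cons_of_mem ht
    have hcard : Multiset.card s' = e + 2 := by
      have := hs; rw [Multiset.card_cons] at this; omega
    obtain ⟨a, ha⟩ : ∃ a, s'.esymm (e+2) = a := ⟨_, rfl⟩
    obtain ⟨b, hb⟩ : ∃ b, s'.esymm (e+1) = b := ⟨_, rfl⟩
    obtain ⟨c, hc⟩ : ∃ c, s'.esymm e = c := ⟨_, rfl⟩
    have ihs : 2*((e:ℝ)+2) * c * a ≤ ((e:ℝ)+1) * b^2 := by
      rw [← ha, ← hb, ← hc]; exact ih s' hcard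
    have e1 : (t ::ₘ s').esymm (e+3) = t * a := by
      have h' := Multiset.esymm_cons t s' (e+2)
      rw [h', Multiset.esymm_eq_zero s' (e+3) (by omega), ha]; ring
    have e2 : (t ::ₘ s').esymm (e+2) = a + t * b := by
      rw [Multiset.esymm_cons t s' (e+1), ha, hb]
    have e3 : (t ::ₘ s').esymm (e+1) = b + t * c := by
      rw [Multiset.esymm_cons t s' e, hb, hc]
    clear ha hb hc
    push_cast
    rw [show e + 1 + 2 = e + 3 by ring, show e + 1 + 1 = e + 2 by ring, e1, e2, e3]
    -- goal: 2*(e+3) * (b + t*c) * (t*a) ≤ (e+2) * (a + t*b)^2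
    rw [show ((e:ℝ) + 1 + 2) = (e:ℝ)+3 by ring, show ((e:ℝ)+1+1) = (e:ℝ)+2 by ring]
    set E : ℝ := (e : ℝ) with hE
    have hE0 : 0 ≤ E := Nat.cast_nonneg e
    set h : ℝ := (E+1)*b^2 - 2*(E+2)*c*a with hh
    have h0 : 0 ≤ h := by rw [hh]; linarith
    set A2 : ℝ := (E+2)*b^2 - 2*(E+3)*c*a with hA2def
    have hA2id : (E+2)*A2 = b^2 + (E+3)*h := by rw [hA2def, hh]; ring
    rcases le_or_gt A2 0 with hA2 | hA2
    · have hb2 : b^2 ≤ 0 := by nlinarith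
      have hb : b = 0 := by nlinarith [sq_nonneg b]
      have hca : c * a = 0 := by nlinarith [sq_nonneg b]
      have hrw : 2*(E+3) * (b + t*c) * (t*a) = 2*(E+3)*t^2*(c*a) + 2*(E+3)*(t*a)*b := by ring
      rw [hrw, hca, hb]
      nlinarith [sq_nonneg a, sq_nonneg (t*b)]
    · have key : 4*A2*((E+2) * (a + t*b)^2 - 2*(E+3) * (b + t*c) * (t*a))
          = (2*A2*t - 2*a*b)^2 + 4*(E+3)*a^2*h := by rw [hA2def, hh]; ring
      have hG4 : 0 ≤ 4*A2*((E+2) * (a + t*b)^2 - 2*(E+3) * (b + t*c) * (t*a)) := by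
        rw [key]
        have := mul_nonneg (mul_nonneg (by linarith : (0:ℝ) ≤ 4*(E+3)) (sq_nonneg a)) h0
        nlinarith [sq_nonneg (2*A2*t - 2*a*b)]
      have h4A2 : 0 < 4*A2 := by linarith
      have := (mul_nonneg_iff_of_pos_left h4A2).mp hG4
      linarith

lemma esymmR_zero (M : ℕ) (x : Fin M → ℝ) : esymmR M x 0 = 1 := by
  simp [esymmR]

lemma coeff_pOf (M : ℕ) (x : Fin M → ℝ) (i : ℕ) (hi : i ≤ M) :
    (∏ i' : Fin M, (X + C (x i'))).coeff i = esymmR M x (M - i) := by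
  have h := Finset.prod_X_add_C_coeff (Finset.univ : Finset (Fin M)) x (k := i)
    (by simpa using hi)
  simpa [esymmR, Finset.card_univ] using h

lemma pOf_monic (M : ℕ) (x : Fin M → ℝ) : (∏ i' : Fin M, (X + C (x i'))).Monic :=
  monic_prod_of_monic _ _ (fun i _ => monic_X_add_C (x i))

lemma pOf_natDegree (M : ℕ) (x : Fin M → ℝ) : (∏ i' : Fin M, (X + C (x i'))).natDegree = M := by
  rw [natDegree_prod _ _ (fun i _ => X_add_C_ne_zero (x i))]
  simp [natDegree_X_add_C]

lemma pOf_roots_card (M : ℕ) (x : Fin M → ℝ) :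
    Multiset.card (∏ i' : Fin M, (X + C (x i'))).roots = M := by
  have hrw : (∏ i' : Fin M, (X + C (x i'))) = ∏ i' : Fin M, (X - C (-(x i'))) := by
    simp [sub_neg_eq_add]
  rw [hrw, roots_prod _ _ (Finset.prod_ne_zero_iff.mpr (fun i _ => X_sub_C_ne_zero _))]
  simp only [roots_X_sub_C]
  simp [Multiset.card_bind]

lemma iter_deriv_realRooted (p : ℝ[X]) (h : Multiset.card p.roots = p.natDegree) :
    ∀ k : ℕ, k ≤ p.natDegree →
      (Polynomial.derivative^[k] p).natDegree = p.natDegree - k ∧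
      Multiset.card (Polynomial.derivative^[k] p).roots = p.natDegree - k := by
  intro k
  induction k with
  | zero => intro _; exact ⟨by simp, by simpa using h⟩
  | succ k ih =>
    intro hk
    obtain ⟨hd, hc⟩ := ih (by omega)
    rw [Function.iterate_succ_apply']
    set q := Polynomial.derivative^[k] p with hq
    have hub : (Polynomial.derivative q).natDegree ≤ p.natDegree - (k+1) := by
      have := natDegree_derivative_le q
      omega
    have hlb : p.natDegree - (k+1) ≤ Multiset.card (Polynomial.derivative q).roots := by
      have := q.card_roots_le_derivative
      omega
    have hub2 := (Polynomial.derivative q).card_roots'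
    constructor <;> omega

lemma newton (M : ℕ) (x : Fin M → ℝ) (j r : ℕ) (hr : M = j + 2 + r) :
    ((j:ℝ)+2) * ((r:ℝ)+2) * (esymmR M x j * esymmR M x (j+2)) ≤
      ((j:ℝ)+1) * ((r:ℝ)+1) * esymmR M x (j+1)^2 := by
  set p : ℝ[X] := ∏ i' : Fin M, (X + C (x i')) with hp
  have hdeg : p.natDegree = M := pOf_natDegree M x
  have hcard : Multiset.card p.roots = p.natDegree := by rw [hdeg]; exact pOf_roots_card M x
  obtain ⟨hqdeg, hqcard⟩ := iter_deriv_realRooted p hcard r (by omega)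
  set q := Polynomial.derivative^[r] p with hq
  rw [hdeg] at hqdeg hqcard
  have hqdeg' : q.natDegree = j + 2 := by omega
  have hqcard' : Multiset.card q.roots = j + 2 := by omega
  -- Newton at the top for the roots of q
  have NT := newtonTop j q.roots hqcard'
  -- Vieta for q
  have hvieta : ∀ i : ℕ, i ≤ j + 2 →
      q.coeff i = q.leadingCoeff * (-1) ^ (j + 2 - i) * q.roots.esymm (j + 2 - i) := by
    intro i hi
    have := Polynomial.coeff_eq_esymm_roots_of_card
      (p := q) (by rw [hqcard', hqdeg']) (k := i) (by omega)
    rwa [hqdeg'] at this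
  -- coefficients of q in terms of esymmR
  have hcoeff : ∀ i : ℕ, i ≤ j + 2 →
      q.coeff i = ((i + r).descFactorial r : ℝ) * esymmR M x (j + 2 - i) := by
    intro i hi
    rw [hq, Polynomial.coeff_iterate_derivative, coeff_pOf M x (i+r) (by omega),
      show M - (i + r) = j + 2 - i by omega, nsmul_eq_mul]
  -- leading coefficient
  have hlead : q.leadingCoeff = (M.descFactorial r : ℝ) := by
    rw [leadingCoeff, hqdeg', hcoeff (j+2) le_rfl, show j + 2 + r = M by omega,
      Nat.sub_self, esymmR_zero, mul_one]
  have hLpos : 0 < (M.descFactorial r : ℝ) := by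
    have : M.descFactorial r ≠ 0 := by
      rw [Ne, Nat.descFactorial_eq_zero_iff_lt]; omega
    positivity
  set L : ℝ := (M.descFactorial r : ℝ) with hL
  -- the three relevant esymms of roots
  have h0 := hvieta 0 (by omega)
  have h1 := hvieta 1 (by omega)
  have h2 := hvieta 2 (by omega)
  rw [hcoeff 0 (by omega)] at h0
  rw [hcoeff 1 (by omega)] at h1
  rw [hcoeff 2 (by omega)] at h2
  rw [hlead] at h0 h1 h2
  simp only [Nat.sub_zero] at h0
  rw [show j + 2 - 1 = j + 1 by omega] at h1
  rw [show j + 2 - 2 = j by omega] at h2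
  -- squared / product versions kill the signs
  have key1 : L^2 * (q.roots.esymm (j+1))^2
      = (((1 + r).descFactorial r : ℝ))^2 * esymmR M x (j+1)^2 := by
    have := congrArg (fun z => z^2) h1
    rw [mul_pow, mul_pow, mul_pow, ← pow_mul] at this
    have hs1 : ((-1:ℝ))^((j+1)*2) = 1 := by rw [mul_comm, pow_mul]; norm_num
    rw [hs1, mul_one] at this
    exact this.symm
  have key2 : L^2 * (q.roots.esymm j * q.roots.esymm (j+2))
      = ((r.descFactorial r : ℝ) * (((2 + r).descFactorial r : ℝ)))
        * (esymmR M x j * esymmR M x (j+2)) := by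
    have hmul := congrArg₂ (fun z w => z * w) h0 h2
    have hsign : ((-1:ℝ)) ^ (j+2) * ((-1:ℝ)) ^ j = 1 := by
      rw [← pow_add, show j + 2 + j = 2*(j+1) by omega, pow_mul]; norm_num
    rw [show ((0+r).descFactorial r) = r.descFactorial r by norm_num] at hmul
    linear_combination (-1 : ℝ) * hmul
      - L^2 * q.roots.esymm (j+2) * q.roots.esymm j * hsign
  -- combine
  have NT2 := mul_le_mul_of_nonneg_left NT (sq_nonneg L)
  rw [show L^2*(2*((j:ℝ)+2)*q.roots.esymm j*q.roots.esymm (j+2))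
        = 2*((j:ℝ)+2)*(L^2*(q.roots.esymm j*q.roots.esymm (j+2))) by ring, key2,
      show L^2*((((j:ℝ))+1)*q.roots.esymm (j+1)^2)
        = ((j:ℝ)+1)*(L^2*q.roots.esymm (j+1)^2) by ring, key1] at NT2
  -- descFactorial values
  set F : ℝ := (Nat.factorial r : ℝ) with hF
  have hFpos : 0 < F := by rw [hF]; exact_mod_cast Nat.factorial_pos r
  have hd0R : ((r.descFactorial r : ℕ) : ℝ) = F := by rw [Nat.descFactorial_self, hF]
  have hd1N : (1+r).descFactorial r = Nat.factorial (1+r) := by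
    have := Nat.factorial_mul_descFactorial (n := 1+r) (k := r) (by omega)
    rw [show 1 + r - r = 1 by omega] at this
    simpa using this
  have hd1R : (((1+r).descFactorial r : ℕ) : ℝ) = ((r:ℝ)+1) * F := by
    rw [hd1N, show 1 + r = r + 1 by omega, Nat.factorial_succ, hF]
    push_cast; ring
  have hd2N : 2 * ((2+r).descFactorial r) = Nat.factorial (2+r) := by
    have := Nat.factorial_mul_descFactorial (n := 2+r) (k := r) (by omega)
    rw [show 2 + r - r = 2 by omega] at this
    simpa [Nat.factorial] using this
  have hd2R : (((2+r).descFactorial r : ℕ) : ℝ) = ((r:ℝ)+2) * ((r:ℝ)+1) * F / 2 := by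
    have h' : 2 * (((2+r).descFactorial r : ℕ) : ℝ) = ((Nat.factorial (2+r) : ℕ) : ℝ) := by
      exact_mod_cast hd2N
    have hfact : ((Nat.factorial (2+r) : ℕ) : ℝ) = ((r:ℝ)+2) * ((r:ℝ)+1) * F := by
      have h2 : Nat.factorial (2+r) = (r+2) * ((r+1) * Nat.factorial r) := by
        rw [show 2 + r = (r+1)+1 by omega, Nat.factorial_succ, Nat.factorial_succ]
      rw [h2, hF]; push_cast; ring
    rw [hfact] at h'
    linarith
  rw [hd0R, hd1R, hd2R] at NT2
  have hpos : 0 < ((r:ℝ)+1) * F^2 := by positivity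
  refine le_of_mul_le_mul_left ?_ hpos
  nlinarith [NT2]

lemma esymmR_zero_of_lt (M : ℕ) (x : Fin M → ℝ) (k : ℕ) (h : M < k) : esymmR M x k = 0 := by
  unfold esymmR
  rw [Finset.powersetCard_eq_empty.mpr (by simpa using h)]
  simp

lemma esymmR_split (M : ℕ) (x : Fin (M+1) → ℝ) (p : Fin (M+1)) (m : ℕ) :
    esymmR (M+1) x (m+1) =
      esymmR M (fun i => x (p.succAbove i)) (m+1)
        + x p * esymmR M (fun i => x (p.succAbove i)) m := by
  set y : Fin M → ℝ := fun i => x (p.succAbove i) with hy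
  have hprod : (∏ i : Fin (M+1), (X + C (x i)))
      = (X + C (x p)) * ∏ i : Fin M, (X + C (y i)) := by
    rw [Fin.prod_univ_succAbove (fun i => (X + C (x i))) p]
  rcases lt_trichotomy m M with hm | hm | hm
  · -- m + 1 ≤ M
    have h1 : esymmR (M+1) x (m+1)
        = (∏ i : Fin (M+1), (X + C (x i))).coeff (M - m) := by
      rw [coeff_pOf (M+1) x (M - m) (by omega), show M + 1 - (M - m) = m + 1 by omega]
    have h2 : esymmR M y (m+1) = (∏ i : Fin M, (X + C (y i))).coeff (M - m - 1) := by
      rw [coeff_pOf M y (M - m - 1) (by omega), show M - (M - m - 1) = m + 1 by omega]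
    have h3 : esymmR M y m = (∏ i : Fin M, (X + C (y i))).coeff (M - m) := by
      rw [coeff_pOf M y (M - m) (by omega), show M - (M - m) = m by omega]
    rw [h1, h2, h3, hprod]
    rw [add_mul, coeff_add, coeff_C_mul, show M - m = (M - m - 1) + 1 by omega,
      coeff_X_mul, Nat.add_sub_cancel]
  · -- m = M
    subst hm
    have h1 : esymmR (m+1) x (m+1)
        = (∏ i : Fin (m+1), (X + C (x i))).coeff 0 := by
      rw [coeff_pOf (m+1) x 0 (by omega), Nat.sub_zero]
    have h3 : esymmR m y m = (∏ i : Fin m, (X + C (y i))).coeff 0 := by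
      rw [coeff_pOf m y 0 (by omega), Nat.sub_zero]
    rw [h1, h3, esymmR_zero_of_lt m y (m+1) (by omega), hprod]
    rw [add_mul, coeff_add, coeff_C_mul, mul_coeff_zero, coeff_X_zero]
    ring
  · -- m > M : everything is zero
    rw [esymmR_zero_of_lt (M+1) x (m+1) (by omega), esymmR_zero_of_lt M y (m+1) (by omega),
      esymmR_zero_of_lt M y m (by omega)]
    ring

lemma deleteCoord_eq (M : ℕ) (x : Fin (M+1) → ℝ) (p : Fin (M+1)) :
    deleteCoord x p = fun i : Fin M => x (p.succAbove i) := by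
  funext i
  simp only [deleteCoord, Fin.succAbove]
  by_cases h : (i : ℕ) < (p : ℕ)
  · rw [if_pos h, if_pos (show i.castSucc < p from by simpa [Fin.lt_def] using h)]
    congr 1
  · rw [if_neg h, if_neg (show ¬ i.castSucc < p from by simpa [Fin.lt_def] using h)]
    congr 1

lemma newton_strict (M : ℕ) (x : Fin M → ℝ) (j r : ℕ) (hr : M = j + 2 + r)
    (hpos : 0 < esymmR M x j * esymmR M x (j+2)) :
    esymmR M x j * esymmR M x (j+2) < esymmR M x (j+1)^2 := by
  have NT := newton M x j r hr
  nlinarith [NT, hpos, Nat.cast_nonneg (α := ℝ) j, Nat.cast_nonneg (α := ℝ) r,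
    mul_nonneg (Nat.cast_nonneg (α := ℝ) j) (Nat.cast_nonneg (α := ℝ) r)]

/-- If `σ_1,…,σ_K > 0` for the full vector, all `σ_m` of a deleted vector
are positive for `m ≤ K - 1`. -/
lemma sigma_delete_pos (M K : ℕ) (x : Fin (M+1) → ℝ) (hK : K ≤ M+1)
    (hσ : ∀ m : ℕ, 1 ≤ m → m ≤ K → 0 < esymmR (M+1) x m) (p : Fin (M+1)) :
    ∀ m : ℕ, m + 1 ≤ K → 0 < esymmR M (fun i => x (p.succAbove i)) m := by
  intro m
  induction m with
  | zero => intro _; rw [esymmR_zero]; norm_num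
  | succ m ih =>
    intro hmK
    set y : Fin M → ℝ := fun i => x (p.succAbove i) with hy
    have hu : 0 < esymmR M y m := ih (by omega)
    by_contra hcon
    push_neg at hcon
    set t := x p with ht'
    have hs1 := esymmR_split M x p m
    have hs2 := esymmR_split M x p (m+1)
    have hx1 : 0 < esymmR (M+1) x (m+1) := hσ (m+1) (by omega) (by omega)
    have hx2 : 0 < esymmR (M+1) x (m+2) := hσ (m+2) (by omega) (by omega)
    rw [hs1] at hx1
    rw [hs2] at hx2
    -- hx1 : 0 < σ_{m+1}(y) + t σ_m(y),  hx2 : 0 < σ_{m+2}(y) + t σ_{m+1}(y)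
    have hv : esymmR M y (m+1) ≤ 0 := hcon
    have htpos : 0 < t := by nlinarith
    have hw : 0 < esymmR M y (m+2) := by nlinarith
    rcases le_or_gt (m+2) M with hcase | hcase
    · -- use Newton's inequality on y
      have huw : esymmR M y (m+1)^2 < esymmR M y m * esymmR M y (m+2) := by
        nlinarith [mul_nonneg hx1.le (neg_nonneg.mpr hv), mul_pos hx2 hu]
      have hNS := newton_strict M y m (M - m - 2) (by omega)
        (by positivity)
      nlinarith [hNS, huw]
    · -- σ_{m+2}(y) must vanish : contradiction with hw
      have : esymmR M y (m+2) = 0 := esymmR_zero_of_lt M y (m+2) (by omega)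
      rw [this] at hw
      exact lt_irrefl 0 hw

/-- Strict monotonicity chain: `σ_a σ_{b-1} < σ_{a-1} σ_b` in the positive cone. -/
lemma sigma_chain (M K : ℕ) (x : Fin M → ℝ) (hK : K ≤ M)
    (hσ : ∀ m : ℕ, m ≤ K → 0 < esymmR M x m) :
    ∀ b a : ℕ, b + 2 ≤ a → a ≤ K →
      esymmR M x a * esymmR M x b < esymmR M x (a-1) * esymmR M x (b+1) := by
  intro b a ha
  induction a, ha using Nat.le_induction with
  | base =>
    intro hbK
    rw [show b + 2 - 1 = b + 1 by omega]
    have := newton_strict M x b (M - b - 2) (by omega)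
      (by
        have p1 := hσ b (by omega)
        have p2 := hσ (b+2) (by omega)
        positivity)
    nlinarith [this]
  | succ a ha ih =>
    intro haK
    have h1 := ih (by omega)
    rw [show a + 1 - 1 = a by omega]
    have hNS : esymmR M x (a-1) * esymmR M x (a+1) < esymmR M x a ^ 2 := by
      have := newton_strict M x (a-1) (M - a - 1) (by omega)
        (by
          have p1 := hσ (a-1) (by omega)
          have p2 := hσ (a+1) (by omega)
          rw [show a - 1 + 2 = a + 1 by omega]
          positivity)
      rw [show a - 1 + 2 = a + 1 by omega, show a - 1 + 1 = a by omega] at this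
      exact this
    have pa1 : 0 < esymmR M x (a-1) := hσ (a-1) (by omega)
    have pa : 0 < esymmR M x a := hσ a (by omega)
    have pb : 0 < esymmR M x b := hσ b (by omega)
    have pb1 : 0 < esymmR M x (b+1) := hσ (b+1) (by omega)
    nlinarith [mul_lt_mul_of_pos_right hNS pb, mul_lt_mul_of_pos_left h1 pa,
      mul_pos pa1 pb]

lemma Hnorm_zero (M : ℕ) (x : Fin M → ℝ) : Hnorm M x 0 = 1 := by
  simp [Hnorm, esymmR_zero]

/-- If `σ_m(λ) > 0` for `1 ≤ m ≤ k`, then for every `p`,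
`(k-1) H_{k-2}(Λ_p) H_{l-1}(λ) - (l-1) H_{k-1}(λ) H_{l-2}(Λ_p) > 0`. -/
theorem stmt_2 (n : ℕ) (hn : 3 ≤ n) (l k : ℕ) (hl : 1 ≤ l) (hlk : l < k) (hk : k ≤ n - 1)
    (lam : Fin (n - 1) → ℝ)
    (hσ : ∀ m : ℕ, 1 ≤ m → m ≤ k → 0 < esymmR (n - 1) lam m) :
    ∀ p : Fin (n - 1),
      0 < ((k : ℝ) - 1) * Hnorm (n - 2) (deleteCoord lam p) (k - 2) * Hnorm (n - 1) lam (l - 1)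
          - ((l : ℝ) - 1) * Hnorm (n - 1) lam (k - 1) * Hnorm (n - 2) (deleteCoord lam p) (l - 2) := by
  intro p
  obtain ⟨N, rfl⟩ : ∃ N, n = N + 3 := ⟨n - 3, by omega⟩
  obtain ⟨α, rfl⟩ : ∃ α, k = α + 2 := ⟨k - 2, by omega⟩
  obtain ⟨β, rfl⟩ : ∃ β, l = β + 1 := ⟨l - 1, by omega⟩
  have hαN : α ≤ N := by omega
  have hσ' : ∀ m : ℕ, 1 ≤ m → m ≤ α + 2 → 0 < esymmR (N+2) lam m := hσ
  have hy : deleteCoord lam p = fun i : Fin (N+1) => lam (p.succAbove i) :=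
    deleteCoord_eq (N+1) lam p
  have hdel : ∀ m : ℕ, m + 1 ≤ α + 2 → 0 < esymmR (N+1) (deleteCoord lam p) m := by
    intro m hm
    rw [hy]
    exact sigma_delete_pos (N+1) (α+2) lam (by omega) hσ' p m hm
  have hsplit : ∀ m : ℕ, esymmR (N+2) lam (m+1)
      = esymmR (N+1) (deleteCoord lam p) (m+1)
        + lam p * esymmR (N+1) (deleteCoord lam p) m := by
    intro m
    rw [hy]
    exact esymmR_split (N+1) lam p m
  rcases β with _ | γ
  · -- l = 1
    show 0 < (((α:ℕ)+2 : ℕ) - 1 : ℝ) * Hnorm (N+1) (deleteCoord lam p) α * Hnorm (N+2) lam 0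
        - (((1:ℕ) : ℝ) - 1) * Hnorm (N+2) lam (α+1) * Hnorm (N+1) (deleteCoord lam p) 0
    have hz : (((1:ℕ) : ℝ) - 1) = 0 := by norm_num
    rw [hz, zero_mul, zero_mul, sub_zero, Hnorm_zero, mul_one]
    have hca : (((α:ℕ)+2 : ℕ) - 1 : ℝ) = (α:ℝ) + 1 := by push_cast; ring
    rw [hca]
    have h1 : 0 < esymmR (N+1) (deleteCoord lam p) α := hdel α (by omega)
    have hc : (0:ℝ) < ((N+1).choose α : ℝ) := by
      exact_mod_cast Nat.choose_pos (by omega : α ≤ N+1)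
    have : 0 < Hnorm (N+1) (deleteCoord lam p) α := by
      unfold Hnorm; exact div_pos h1 hc
    positivity
  · -- l = γ + 2
    show 0 < (((α:ℕ)+2 : ℕ) - 1 : ℝ) * Hnorm (N+1) (deleteCoord lam p) α * Hnorm (N+2) lam (γ+1)
        - (((γ:ℕ)+2 : ℕ) - 1 : ℝ) * Hnorm (N+2) lam (α+1) * Hnorm (N+1) (deleteCoord lam p) γ
    have hγα : γ + 2 ≤ α + 1 := by omega
    -- chain inequality on the deleted vector
    have hch : esymmR (N+1) (deleteCoord lam p) (α+1) * esymmR (N+1) (deleteCoord lam p) γ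
        < esymmR (N+1) (deleteCoord lam p) α * esymmR (N+1) (deleteCoord lam p) (γ+1) := by
      have := sigma_chain (N+1) (α+1) (deleteCoord lam p) (by omega)
        (fun m hm => hdel m (by omega)) γ (α+1) (by omega) le_rfl
      rwa [show α + 1 - 1 = α by omega] at this
    have hR : esymmR (N+2) lam (α+1) * esymmR (N+1) (deleteCoord lam p) γ
        < esymmR (N+1) (deleteCoord lam p) α * esymmR (N+2) lam (γ+1) := by
      rw [hsplit α, hsplit γ]; nlinarith [hch]
    have hc1 : (0:ℝ) < ((N+1).choose α : ℝ) := by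
      exact_mod_cast Nat.choose_pos (by omega : α ≤ N+1)
    have hc2 : (0:ℝ) < ((N+2).choose (γ+1) : ℝ) := by
      exact_mod_cast Nat.choose_pos (by omega : γ+1 ≤ N+2)
    have hc3 : (0:ℝ) < ((N+2).choose (α+1) : ℝ) := by
      exact_mod_cast Nat.choose_pos (by omega : α+1 ≤ N+2)
    have hc4 : (0:ℝ) < ((N+1).choose γ : ℝ) := by
      exact_mod_cast Nat.choose_pos (by omega : γ ≤ N+1)
    have hid1 : ((α:ℝ)+1) * ((N+2).choose (α+1) : ℝ) = ((N:ℝ)+2) * ((N+1).choose α : ℝ) := by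
      have h' : (N + 2) * (N+1).choose α = (N+2).choose (α+1) * (α+1) :=
        Nat.add_one_mul_choose_eq (N+1) α
      have := congrArg (Nat.cast (R := ℝ)) h'
      push_cast at this
      linarith
    have hid2 : ((γ:ℝ)+1) * ((N+2).choose (γ+1) : ℝ) = ((N:ℝ)+2) * ((N+1).choose γ : ℝ) := by
      have h' : (N + 2) * (N+1).choose γ = (N+2).choose (γ+1) * (γ+1) :=
        Nat.add_one_mul_choose_eq (N+1) γ
      have := congrArg (Nat.cast (R := ℝ)) h'
      push_cast at this
      linarith
    have hca : (((α:ℕ)+2 : ℕ) - 1 : ℝ) = (α:ℝ) + 1 := by push_cast; ring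
    have hcg : (((γ:ℕ)+2 : ℕ) - 1 : ℝ) = (γ:ℝ) + 1 := by push_cast; ring
    rw [hca, hcg]
    unfold Hnorm
    -- make all quantities opaque
    obtain ⟨A', hA'⟩ : ∃ v, esymmR (N+1) (deleteCoord lam p) α = v := ⟨_, rfl⟩
    obtain ⟨B', hB'⟩ : ∃ v, esymmR (N+1) (deleteCoord lam p) γ = v := ⟨_, rfl⟩
    obtain ⟨Al, hAl⟩ : ∃ v, esymmR (N+2) lam (α+1) = v := ⟨_, rfl⟩
    obtain ⟨Bl, hBl⟩ : ∃ v, esymmR (N+2) lam (γ+1) = v := ⟨_, rfl⟩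
    obtain ⟨c1, he1⟩ : ∃ v, ((N+1).choose α : ℝ) = v := ⟨_, rfl⟩
    obtain ⟨c2, he2⟩ : ∃ v, ((N+2).choose (γ+1) : ℝ) = v := ⟨_, rfl⟩
    obtain ⟨c3, he3⟩ : ∃ v, ((N+2).choose (α+1) : ℝ) = v := ⟨_, rfl⟩
    obtain ⟨c4, he4⟩ : ∃ v, ((N+1).choose γ : ℝ) = v := ⟨_, rfl⟩
    rw [hA', hB', hAl, hBl] at hR ⊢
    simp only [he1, he2, he3, he4] at hc1 hc2 hc3 hc4 hid1 hid2 ⊢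
    have e1 : ((α:ℝ)+1)/(c1*c2) = ((N:ℝ)+2)/(c3*c2) := by
      rw [div_eq_div_iff (by positivity) (by positivity)]
      linear_combination c2 * hid1
    have e2 : ((γ:ℝ)+1)/(c3*c4) = ((N:ℝ)+2)/(c3*c2) := by
      rw [div_eq_div_iff (by positivity) (by positivity)]
      linear_combination c3 * hid2
    have key : ((α:ℝ)+1) * (A'/c1) * (Bl/c2) - ((γ:ℝ)+1) * (Al/c3) * (B'/c4)
        = (((N:ℝ)+2)/(c3*c2)) * (A'*Bl - Al*B') := by
      calc ((α:ℝ)+1) * (A'/c1) * (Bl/c2) - ((γ:ℝ)+1) * (Al/c3) * (B'/c4)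
          = (((α:ℝ)+1)/(c1*c2))*(A'*Bl) - (((γ:ℝ)+1)/(c3*c4))*(Al*B') := by
            field_simp
        _ = (((N:ℝ)+2)/(c3*c2))*(A'*Bl) - (((N:ℝ)+2)/(c3*c2))*(Al*B') := by rw [e1, e2]
        _ = (((N:ℝ)+2)/(c3*c2)) * (A'*Bl - Al*B') := by ring
    rw [key]
    exact mul_pos (by positivity) (by linarith)
end

section
/- Let n ≥ 3 and 2 ≤ l < k ≤ n−1 be integers, and let λ ∈ ℝ^{n−1} satisfy σ_m(λ) ≥ 0 for all 1 ≤ m ≤ k. Let a_1, …, a_{l−1} and b_l, …, b_k be nonnegative real numbers such that Σ_{i=1}^{l−1} a_i H_i(λ) = Σ_{j=l}^{k} b_j H_j(λ) > 0. Then Σ_{j=l}^{k} b_j H_{j−1}(λ) ≥ Σ_{i=1}^{l−1} a_i H_{i−1}(λ). -/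
/-!
Newton's inequalities `H_m H_{m+2} ≤ H_{m+1}²` hold for every finite multiset of reals. By Rolle,
the derivative of `∏ (X - λᵢ)` again has only real roots, and these have the same normalized
elementary symmetric functions `H_j` for `j` below its degree; so one may assume that the multiset
has exactly `m + 2` elements. Inverting them turns `H_m`, `H_{m+1}`, `H_{m+2}` into
`H_2 P`, `H_1 P`, `P` with `P` the product, and `H_2 ≤ H_1²` reduces in the same way to
`ab ≤ ((a + b) / 2)²`. The same reduction shows that `H_m = H_{m+1} = 0` forces `H_{m+2} = 0`,
since otherwise the inverted elements would have vanishing sum of squares.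

A sequence that is nonnegative, satisfies Newton's inequalities and has no such gap of two zeros
satisfies `H_i H_{j+1} ≤ H_{i+1} H_j` for `i ≤ j`; multiplying the two weighted sums crosswise
and cancelling the common positive value gives the theorem.
-/

namespace Multiset

section CommSemiring

variable {R : Type*} [CommSemiring R]

theorem esymm_zero (s : Multiset R) : s.esymm 0 = 1 := by
  simp [esymm, powersetCard_zero_left]

theorem esymm_eq_zero_of_card_lt {s : Multiset R} {k : ℕ} (h : card s < k) : s.esymm k = 0 := by
  simp [esymm, powersetCard_eq_empty _ h]

theorem esymm_cons_succ (a : R) (s : Multiset R) (k : ℕ) :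
    (a ::ₘ s).esymm (k + 1) = s.esymm (k + 1) + a * s.esymm k := by
  simp [esymm, powersetCard_cons, ← sum_map_mul_left]

theorem esymm_one (s : Multiset R) : s.esymm 1 = s.sum := by
  simp [esymm, powersetCard_one]

theorem esymm_card (s : Multiset R) : s.esymm (card s) = s.prod := by
  simp [esymm, powersetCard_self]

end CommSemiring

theorem sum_map_sq_eq_sq_sum_sub_two_mul_esymm_two {R : Type*} [CommRing R] (s : Multiset R) :
    (s.map (· ^ 2)).sum = s.sum ^ 2 - 2 * s.esymm 2 := by
  induction s using Multiset.induction with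
  | empty => simp [esymm_eq_zero_of_card_lt (s := (0 : Multiset R)) (k := 2) (by simp)]
  | cons a s ih =>
    rw [map_cons, sum_cons, sum_cons, ih, esymm_cons_succ, esymm_one]
    ring

theorem esymm_map_inv_mul_prod {K : Type*} [Field K] {s : Multiset K} (hs : (0 : K) ∉ s)
    {r t : ℕ} (h : r + t = card s) : (s.map (·⁻¹)).esymm r * s.prod = s.esymm t := by
  induction s using Multiset.induction generalizing r t with
  | empty => simp_all [esymm_zero]
  | cons a s ih =>
    have ha : a ≠ 0 := fun ha => hs (ha ▸ mem_cons_self a s)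
    have hs' : (0 : K) ∉ s := fun h0 => hs (mem_cons_of_mem h0)
    rw [card_cons] at h
    rcases r with _ | r
    · rw [esymm_zero, one_mul, ← esymm_card, card_cons, ← h, zero_add]
    have hlow : (s.map (·⁻¹)).esymm r * s.prod = s.esymm t := ih hs' (by omega)
    rw [map_cons, esymm_cons_succ, prod_cons, add_mul, mul_mul_mul_comm, inv_mul_cancel₀ ha,
      one_mul, hlow]
    rcases t with _ | t
    · rw [esymm_eq_zero_of_card_lt (by simp; omega), zero_mul, zero_add, esymm_zero, esymm_zero]
    · rw [mul_left_comm, ih hs' (t := t) (by omega), esymm_cons_succ, add_comm]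

noncomputable def normalizedEsymm {K : Type*} [Field K] (s : Multiset K) (k : ℕ) : K :=
  s.esymm k / (card s).choose k

section Field

variable {K : Type*} [Field K]

theorem normalizedEsymm_zero (s : Multiset K) : s.normalizedEsymm 0 = 1 := by
  simp [normalizedEsymm, esymm_zero]

theorem normalizedEsymm_eq_zero_of_card_lt {s : Multiset K} {k : ℕ} (h : card s < k) :
    s.normalizedEsymm k = 0 := by
  simp [normalizedEsymm, esymm_eq_zero_of_card_lt h]

theorem normalizedEsymm_card (s : Multiset K) : s.normalizedEsymm (card s) = s.prod := by
  simp [normalizedEsymm, esymm_card]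

theorem normalizedEsymm_map_inv_mul_prod {s : Multiset K} (hs : (0 : K) ∉ s) {r t : ℕ}
    (h : r + t = card s) : (s.map (·⁻¹)).normalizedEsymm r * s.prod = s.normalizedEsymm t := by
  rw [normalizedEsymm, normalizedEsymm, card_map, div_mul_eq_mul_div, esymm_map_inv_mul_prod hs h,
    ← h, Nat.choose_symm_add]

end Field

section Derivative

open Polynomial

variable (s : Multiset ℝ)

theorem card_roots_derivative_prod_X_sub_C :
    card (derivative (s.map (X - C ·)).prod).roots = card s - 1 := by
  have hdeg : (s.map (X - C ·)).prod.natDegree = card s :=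
    natDegree_multiset_prod_X_sub_C_eq_card s
  refine le_antisymm ?_ ?_
  · exact (card_roots' _).trans (by rw [natDegree_derivative, hdeg])
  · have := card_roots_le_derivative (s.map (X - C ·)).prod
    rw [roots_multiset_prod_X_sub_C] at this
    omega

theorem card_mul_esymm_roots_derivative_prod_X_sub_C {j : ℕ} (hj : j < card s) :
    (card s : ℝ) * (derivative (s.map (X - C ·)).prod).roots.esymm j =
      ((card s - j : ℕ) : ℝ) * s.esymm j := by
  set p := (s.map (X - C ·)).prod
  set n := card s
  have hdeg : p.natDegree = n := natDegree_multiset_prod_X_sub_C_eq_card s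
  have hroots : card (derivative p).roots = (derivative p).natDegree := by
    rw [card_roots_derivative_prod_X_sub_C, natDegree_derivative, hdeg]
  have hvieta := coeff_eq_esymm_roots_of_card hroots (k := n - 1 - j)
    (by rw [natDegree_derivative, hdeg]; omega)
  have hcoeff := prod_X_sub_C_coeff s (k := n - j) (by omega)
  rw [natDegree_derivative, hdeg, show n - 1 - (n - 1 - j) = j by omega, leadingCoeff_derivative,
    (monic_multiset_prod_of_monic _ _ fun a _ => monic_X_sub_C a).leadingCoeff, hdeg,
    coeff_derivative, show n - 1 - j + 1 = n - j by omega, hcoeff,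
    show n - (n - j) = j by omega] at hvieta
  have hcast : ((n - 1 - j : ℕ) : ℝ) + 1 = ((n - j : ℕ) : ℝ) := by norm_cast; omega
  rw [hcast] at hvieta
  apply mul_left_cancel₀ (pow_ne_zero j (by norm_num : (-1 : ℝ) ≠ 0))
  linear_combination -hvieta

theorem normalizedEsymm_roots_derivative_prod_X_sub_C {j : ℕ} (hj : j < card s) :
    (derivative (s.map (X - C ·)).prod).roots.normalizedEsymm j = s.normalizedEsymm j := by
  have hkey := card_mul_esymm_roots_derivative_prod_X_sub_C s hj
  have hchoose :
      ((card s - 1).choose j : ℝ) * card s = (card s).choose j * (card s - j : ℕ) := by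
    have := Nat.choose_mul_succ_eq (card s - 1) j
    rw [Nat.sub_add_cancel (by omega)] at this
    exact_mod_cast this
  have hn : (card s : ℝ) ≠ 0 := by exact_mod_cast (Nat.zero_lt_of_lt hj).ne'
  have hc : ((card s - 1).choose j : ℝ) ≠ 0 := by
    exact_mod_cast (Nat.choose_pos (by omega)).ne'
  have hc' : ((card s).choose j : ℝ) ≠ 0 := by exact_mod_cast (Nat.choose_pos (by omega)).ne'
  rw [normalizedEsymm, normalizedEsymm, card_roots_derivative_prod_X_sub_C,
    div_eq_div_iff hc hc']
  apply mul_left_cancel₀ hn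
  linear_combination (card s).choose j * hkey - s.esymm j * hchoose

end Derivative

theorem exists_card_eq_normalizedEsymm_eq (s : Multiset ℝ) {m : ℕ} (hm : m ≤ card s) :
    ∃ t : Multiset ℝ, card t = m ∧
      ∀ j ≤ m, t.normalizedEsymm j = s.normalizedEsymm j := by
  obtain ⟨d, hd⟩ := Nat.exists_eq_add_of_le hm
  induction d generalizing s with
  | zero => exact ⟨s, hd, fun _ _ => rfl⟩
  | succ d ih =>
    open Polynomial in
    obtain ⟨t, htm, ht⟩ := ih (derivative (s.map (X - C ·)).prod).roots
      (by rw [card_roots_derivative_prod_X_sub_C]; omega)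
      (by rw [card_roots_derivative_prod_X_sub_C]; omega)
    exact ⟨t, htm, fun j hj => (ht j hj).trans
      (normalizedEsymm_roots_derivative_prod_X_sub_C s (by omega))⟩

theorem normalizedEsymm_two_le_sq (s : Multiset ℝ) :
    s.normalizedEsymm 2 ≤ s.normalizedEsymm 1 ^ 2 := by
  rcases lt_or_ge (card s) 2 with hs | hs
  · rw [normalizedEsymm_eq_zero_of_card_lt hs]
    positivity
  obtain ⟨t, ht, hts⟩ := exists_card_eq_normalizedEsymm_eq s hs
  rw [← hts 1 (by norm_num), ← hts 2 le_rfl]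
  obtain ⟨a, b, rfl⟩ := card_eq_two.mp ht
  simp only [normalizedEsymm, insert_eq_cons, esymm_pair_one, esymm_pair_two]
  norm_num
  nlinarith [sq_nonneg (a - b)]

theorem normalizedEsymm_mul_le_sq_of_card_eq {s : Multiset ℝ} {m : ℕ} (hs : card s = m + 2) :
    s.normalizedEsymm m * s.normalizedEsymm (m + 2) ≤ s.normalizedEsymm (m + 1) ^ 2 := by
  rw [← hs, normalizedEsymm_card]
  by_cases hprod : s.prod = 0
  · rw [hprod, mul_zero]
    positivity
  have h0 : (0 : ℝ) ∉ s := fun h => hprod (prod_eq_zero h)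
  rw [← normalizedEsymm_map_inv_mul_prod h0 (r := 2) (by omega),
    ← normalizedEsymm_map_inv_mul_prod h0 (r := 1) (by omega)]
  have := normalizedEsymm_two_le_sq (s.map (·⁻¹))
  nlinarith [sq_nonneg s.prod]

theorem normalizedEsymm_mul_le_sq (s : Multiset ℝ) (m : ℕ) :
    s.normalizedEsymm m * s.normalizedEsymm (m + 2) ≤ s.normalizedEsymm (m + 1) ^ 2 := by
  rcases lt_or_ge (card s) (m + 2) with hs | hs
  · rw [normalizedEsymm_eq_zero_of_card_lt hs, mul_zero]
    positivity
  obtain ⟨t, ht, hts⟩ := exists_card_eq_normalizedEsymm_eq s hs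
  rw [← hts m (by omega), ← hts (m + 1) (by omega), ← hts (m + 2) le_rfl]
  exact normalizedEsymm_mul_le_sq_of_card_eq ht

theorem normalizedEsymm_add_two_eq_zero_of_card_eq {s : Multiset ℝ} {m : ℕ}
    (hs : card s = m + 2) (h₀ : s.normalizedEsymm m = 0) (h₁ : s.normalizedEsymm (m + 1) = 0) :
    s.normalizedEsymm (m + 2) = 0 := by
  rw [← hs, normalizedEsymm_card]
  by_contra hprod
  have h0 : (0 : ℝ) ∉ s := fun h => hprod (prod_eq_zero h)
  set y := s.map (·⁻¹)
  have hy : card y = m + 2 := by rw [card_map, hs]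
  have hchoose (r : ℕ) (hr : r ≤ m + 2) : ((m + 2).choose r : ℝ) ≠ 0 := by
    exact_mod_cast (Nat.choose_pos hr).ne'
  have hy₁ : y.esymm 1 = 0 := by
    rw [← normalizedEsymm_map_inv_mul_prod h0 (r := 1) (by omega), mul_eq_zero,
      normalizedEsymm, hy, div_eq_zero_iff] at h₁
    exact (h₁.resolve_right hprod).resolve_right (hchoose 1 (by omega))
  have hy₂ : y.esymm 2 = 0 := by
    rw [← normalizedEsymm_map_inv_mul_prod h0 (r := 2) (by omega), mul_eq_zero,
      normalizedEsymm, hy, div_eq_zero_iff] at h₀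
    exact (h₀.resolve_right hprod).resolve_right (hchoose 2 (by omega))
  have hsq : (y.map (· ^ 2)).sum = 0 := by
    rw [sum_map_sq_eq_sq_sum_sub_two_mul_esymm_two, ← esymm_one, hy₁, hy₂]
    ring
  obtain ⟨a, ha⟩ := card_pos_iff_exists_mem.mp (show 0 < card s by omega)
  have hsq_a := all_zero_of_le_zero_le_of_sum_eq_zero (by simp [sq_nonneg]) hsq (a⁻¹ ^ 2)
    (mem_map_of_mem _ (mem_map_of_mem _ ha))
  have ha0 : a = 0 := by simpa using hsq_a
  exact h0 (ha0 ▸ ha)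

theorem normalizedEsymm_add_two_eq_zero {s : Multiset ℝ} {m : ℕ}
    (h₀ : s.normalizedEsymm m = 0) (h₁ : s.normalizedEsymm (m + 1) = 0) :
    s.normalizedEsymm (m + 2) = 0 := by
  rcases lt_or_ge (card s) (m + 2) with hs | hs
  · exact normalizedEsymm_eq_zero_of_card_lt hs
  obtain ⟨t, ht, hts⟩ := exists_card_eq_normalizedEsymm_eq s hs
  rw [← hts m (by omega)] at h₀
  rw [← hts (m + 1) (by omega)] at h₁
  rw [← hts (m + 2) le_rfl]
  exact normalizedEsymm_add_two_eq_zero_of_card_eq ht h₀ h₁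

end Multiset

theorem mul_succ_le_succ_mul_of_sq_le {α : Type*} [Field α] [LinearOrder α]
    [IsStrictOrderedRing α]
    {H : ℕ → α} {K : ℕ} (hH : ∀ r ≤ K, 0 ≤ H r)
    (hsq : ∀ m, H m * H (m + 2) ≤ H (m + 1) ^ 2)
    (hzero : ∀ m, H m = 0 → H (m + 1) = 0 → H (m + 2) = 0) {i j : ℕ} (hij : i ≤ j)
    (hjK : j + 1 ≤ K) : H i * H (j + 1) ≤ H (i + 1) * H j := by
  induction j, hij using Nat.le_induction with
  | base => rw [mul_comm]
  | succ j hij ih =>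
    have ih := ih (by omega)
    rcases (hH (j + 1) (by omega)).eq_or_lt with hj | hj
    · have hj2 : H (j + 2) = 0 := by
        rcases mul_eq_zero.mp (le_antisymm (by simpa [← hj] using hsq j)
          (mul_nonneg (hH j (by omega)) (hH (j + 2) (by omega)))) with h | h
        · exact hzero j h hj.symm
        · exact h
      rw [hj2, ← hj, mul_zero, mul_zero]
    · refine le_of_mul_le_mul_left ?_ hj
      calc H (j + 1) * (H i * H (j + 2)) = H i * H (j + 1) * H (j + 2) := by ring
        _ ≤ H (i + 1) * H j * H (j + 2) := by gcongr; exact hH _ (by omega)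
        _ ≤ H (i + 1) * H (j + 1) ^ 2 := by
          rw [mul_assoc]; gcongr
          · exact hH _ (by omega)
          · exact hsq j
        _ = H (j + 1) * (H (i + 1) * H (j + 1)) := by ring

theorem Hnorm_eq_normalizedEsymm (m : ℕ) (x : Fin m → ℝ) (r : ℕ) :
    Hnorm m x r = (Finset.univ.val.map x).normalizedEsymm r := by
  rw [Hnorm, Multiset.normalizedEsymm, Finset.esymm_map_val]
  simp [esymmR]

theorem stmt_4_general (n : ℕ) (l k : ℕ)
    (lam : Fin (n - 1) → ℝ)
    (hσ : ∀ m : ℕ, 1 ≤ m → m ≤ k → 0 ≤ esymmR (n - 1) lam m)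
    (a b : ℕ → ℝ)
    (ha : ∀ i ∈ Finset.Icc 1 (l - 1), 0 ≤ a i)
    (hb : ∀ j ∈ Finset.Icc l k, 0 ≤ b j)
    (heq : ∑ i ∈ Finset.Icc 1 (l - 1), a i * Hnorm (n - 1) lam i =
           ∑ j ∈ Finset.Icc l k, b j * Hnorm (n - 1) lam j)
    (hpos : 0 < ∑ j ∈ Finset.Icc l k, b j * Hnorm (n - 1) lam j) :
    ∑ i ∈ Finset.Icc 1 (l - 1), a i * Hnorm (n - 1) lam (i - 1) ≤
      ∑ j ∈ Finset.Icc l k, b j * Hnorm (n - 1) lam (j - 1) := by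
  set s := Finset.univ.val.map lam
  have hH : ∀ r ≤ k, 0 ≤ s.normalizedEsymm r := by
    rintro (_ | r) hr
    · simp [Multiset.normalizedEsymm_zero]
    · rw [← Hnorm_eq_normalizedEsymm, Hnorm]
      exact div_nonneg (hσ _ (by omega) hr) (by positivity)
  simp only [Hnorm_eq_normalizedEsymm] at heq hpos ⊢
  have hcross : ∀ i ∈ Finset.Icc 1 (l - 1), ∀ j ∈ Finset.Icc l k,
      s.normalizedEsymm (i - 1) * s.normalizedEsymm j ≤
        s.normalizedEsymm i * s.normalizedEsymm (j - 1) := by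
    intro i hi j hj
    rw [Finset.mem_Icc] at hi hj
    obtain ⟨i, rfl⟩ := Nat.exists_eq_add_of_le' hi.1
    obtain ⟨j, rfl⟩ := Nat.exists_eq_add_of_le' (by omega : 1 ≤ j)
    simpa using mul_succ_le_succ_mul_of_sq_le hH s.normalizedEsymm_mul_le_sq
      (fun _ => Multiset.normalizedEsymm_add_two_eq_zero) (by omega : i ≤ j) hj.2
  have hcross_sum : (∑ i ∈ Finset.Icc 1 (l - 1), a i * s.normalizedEsymm (i - 1)) *
      (∑ j ∈ Finset.Icc l k, b j * s.normalizedEsymm j) ≤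
      (∑ i ∈ Finset.Icc 1 (l - 1), a i * s.normalizedEsymm i) *
      (∑ j ∈ Finset.Icc l k, b j * s.normalizedEsymm (j - 1)) := by
    rw [Finset.sum_mul_sum, Finset.sum_mul_sum]
    refine Finset.sum_le_sum fun i hi => Finset.sum_le_sum fun j hj => ?_
    have := mul_le_mul_of_nonneg_left (hcross i hi j hj) (mul_nonneg (ha i hi) (hb j hj))
    linarith
  rw [heq, mul_comm] at hcross_sum
  exact le_of_mul_le_mul_left hcross_sum hpos

/-- If `σ_m(λ) ≥ 0` for `1 ≤ m ≤ k`, and nonnegative constants satisfy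
`Σ_{i=1}^{l-1} a_i H_i = Σ_{j=l}^{k} b_j H_j > 0`, then
`Σ_{j=l}^{k} b_j H_{j-1} ≥ Σ_{i=1}^{l-1} a_i H_{i-1}`. -/
theorem stmt_4 (n : ℕ) (hn : 3 ≤ n) (l k : ℕ) (hl : 2 ≤ l) (hlk : l < k) (hk : k ≤ n - 1)
    (lam : Fin (n - 1) → ℝ)
    (hσ : ∀ m : ℕ, 1 ≤ m → m ≤ k → 0 ≤ esymmR (n - 1) lam m)
    (a b : ℕ → ℝ)
    (ha : ∀ i ∈ Finset.Icc 1 (l - 1), 0 ≤ a i)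
    (hb : ∀ j ∈ Finset.Icc l k, 0 ≤ b j)
    (heq : ∑ i ∈ Finset.Icc 1 (l - 1), a i * Hnorm (n - 1) lam i =
           ∑ j ∈ Finset.Icc l k, b j * Hnorm (n - 1) lam j)
    (hpos : 0 < ∑ j ∈ Finset.Icc l k, b j * Hnorm (n - 1) lam j) :
    ∑ i ∈ Finset.Icc 1 (l - 1), a i * Hnorm (n - 1) lam (i - 1) ≤
      ∑ j ∈ Finset.Icc l k, b j * Hnorm (n - 1) lam (j - 1) :=
  stmt_4_general n l k lam hσ a b ha hb heq hpos
end
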